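/- For λ1, λ2 ∉ ℤ_{≤0} with λ1+λ2 ∉ ℤ_{≤0} and ℓ ∈ ℕ, the map Φ̃_ℓ^{λ1,λ2}: Pol(t) → Pol(x,y) defined by Φ̃_ℓ Q(x,y) = (x+y)^ℓ P_ℓ^{(λ1-1,λ2-1)}((y-x)/(x+y)) Q(x+y) intertwines the lowest weight module π*_{λ1+λ2+2ℓ} with the tensor product π*_{λ1} ⊗ π*_{λ2}: for Z ∈ {H, E, F}, Φ̃_ℓ ∘ π*_{λ1+λ2+2ℓ}(Z) = (π*_{λ1} ⊗ π*_{λ2})(Z) ∘ Φ̃_ℓ. -/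

import Mathlib

/-!
Write `Φ̃_ℓ Q = K · Q(x + y)`, where `K = (x + y)^ℓ P_ℓ^{(λ1-1,λ2-1)}((y - x)/(x + y))` is a
binary form of degree `ℓ`. Both `∂ₓ` and `∂_y` act on `Q(x + y)` as `Q ↦ Q'`, so by the Leibniz
rule the `H`- and `F`-identities reduce to two facts about `K`: Euler's identity
`(x∂ₓ + y∂_y) K = ℓ K`, and the Jacobi equation `(x∂ₓ² + λ1∂ₓ + y∂_y² + λ2∂_y) K = 0`. The latter
is a two-term recursion for the coefficients of `K`, which follows from
`(m + 1) C(a, m + 1) = (a - m) C(a, m)`.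
-/

open MvPolynomial Finset

/-- Generalized binomial coefficient `C(a, m) = (a-m+1)_m / m!`. -/
noncomputable def gbinom (a : ℂ) (m : ℕ) : ℂ :=
  (ascPochhammer ℂ m).eval (a - m + 1) / m.factorial

/-- Lowest weight module `π*_λ(H) P = λP + 2xP'` on `Pol(x)`. -/
noncomputable def sH (l : ℂ) (P : Polynomial ℂ) : Polynomial ℂ :=
  l • P + (2 : ℂ) • (Polynomial.X * Polynomial.derivative P)

/-- `π*_λ(E) P = xP`. -/
noncomputable def sE (P : Polynomial ℂ) : Polynomial ℂ := Polynomial.X * P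

/-- `π*_λ(F) P = -(xP'' + λP')`. -/
noncomputable def sF (l : ℂ) (P : Polynomial ℂ) : Polynomial ℂ :=
  -(Polynomial.X * Polynomial.derivative (Polynomial.derivative P)
      + l • Polynomial.derivative P)

/-- `(π*_{λ1} ⊗ π*_{λ2})(H) P = (λ1+λ2)P + 2(x∂_x + y∂_y)P` on `Pol(x,y)`. -/
noncomputable def tH (l1 l2 : ℂ) (P : MvPolynomial (Fin 2) ℂ) : MvPolynomial (Fin 2) ℂ :=
  (l1 + l2) • P + (2 : ℂ) • (X 0 * pderiv 0 P + X 1 * pderiv 1 P)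

/-- `(π*_{λ1} ⊗ π*_{λ2})(E) P = (x+y)P`. -/
noncomputable def tE (P : MvPolynomial (Fin 2) ℂ) : MvPolynomial (Fin 2) ℂ :=
  (X 0 + X 1) * P

/-- `(π*_{λ1} ⊗ π*_{λ2})(F) P = -((x∂_x² + y∂_y²)P + λ1∂_xP + λ2∂_yP)`. -/
noncomputable def tF (l1 l2 : ℂ) (P : MvPolynomial (Fin 2) ℂ) : MvPolynomial (Fin 2) ℂ :=
  -(X 0 * pderiv 0 (pderiv 0 P) + X 1 * pderiv 1 (pderiv 1 P))
    - l1 • pderiv 0 P - l2 • pderiv 1 P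

/-- The map `Φ̃_ℓ^{λ1,λ2} Q(x,y) = (x+y)^ℓ P_ℓ^{(λ1-1,λ2-1)}((y-x)/(x+y)) Q(x+y)`, written
as a polynomial: `(Σ_s (-1)^s C(ℓ+λ1-1,ℓ-s) C(ℓ+λ2-1,s) x^s y^{ℓ-s}) · Q(x+y)`. -/
noncomputable def intertwiner (l1 l2 : ℂ) (l : ℕ) (Q : Polynomial ℂ) :
    MvPolynomial (Fin 2) ℂ :=
  (∑ s ∈ Finset.range (l + 1),
      ((-1 : ℂ) ^ s * gbinom ((l : ℂ) + l1 - 1) (l - s) * gbinom ((l : ℂ) + l2 - 1) s) •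
        (X 0 ^ s * X 1 ^ (l - s))) *
    Polynomial.aeval (X 0 + X 1) Q

lemma gbinom_succ (a : ℂ) (m : ℕ) :
    ((m : ℂ) + 1) * gbinom a (m + 1) = (a - m) * gbinom a m := by
  have hpoch : (ascPochhammer ℂ (m + 1)).eval (a - (m + 1 : ℕ) + 1)
      = (a - m) * (ascPochhammer ℂ m).eval (a - m + 1) := by
    rw [ascPochhammer_succ_left, Polynomial.eval_mul, Polynomial.eval_comp]
    simp only [Polynomial.eval_X, Polynomial.eval_add, Polynomial.eval_one]
    push_cast
    ring_nf
  have hfact : ((m + 1).factorial : ℂ) = ((m : ℂ) + 1) * m.factorial := by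
    push_cast [Nat.factorial_succ]; ring
  have hm : ((m : ℂ) + 1) ≠ 0 := Nat.cast_add_one_ne_zero m
  rw [gbinom, gbinom, hpoch, hfact]
  field_simp

section BesselOperator

variable {R σ : Type*} [CommRing R]

/-- In the variable `X i`, `π*_a(F) = -besselOp a i`. -/
noncomputable def besselOp (a : R) (i : σ) : MvPolynomial σ R →ₗ[R] MvPolynomial σ R :=
  LinearMap.mulLeft R (X i) ∘ₗ (pderiv i).toLinearMap ∘ₗ (pderiv i).toLinearMap +
    a • (pderiv i).toLinearMap

lemma besselOp_apply (a : R) (i : σ) (P : MvPolynomial σ R) :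
    besselOp a i P = X i * pderiv i (pderiv i P) + a • pderiv i P := rfl

variable {i j : σ}

lemma besselOp_X_pow_of_ne (a : R) (hji : j ≠ i) (t : ℕ) : besselOp a i (X j ^ t) = 0 := by
  simp [besselOp_apply, pderiv_X_of_ne hji]

lemma besselOp_X_pow_succ_mul (a : R) (hij : i ≠ j) (s t : ℕ) :
    besselOp a i (X i ^ (s + 1) * X j ^ t) = (((s : R) + 1) * (s + a)) • (X i ^ s * X j ^ t) := by
  cases s with
  | zero => simp [besselOp_apply, pderiv_X_of_ne hij.symm]
  | succ s =>
    simp [besselOp_apply, pderiv_X_of_ne hij.symm, smul_eq_C_mul]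
    ring

lemma besselOp_X_pow_mul_X_pow_succ (a : R) (hij : i ≠ j) (s t : ℕ) :
    besselOp a i (X j ^ s * X i ^ (t + 1)) = (((t : R) + 1) * (t + a)) • (X j ^ s * X i ^ t) := by
  rw [mul_comm, besselOp_X_pow_succ_mul a hij, mul_comm (X i ^ t)]

end BesselOperator

section BinaryForm

variable {R : Type*} [CommRing R]

noncomputable def binaryForm (c : ℕ → ℕ → R) (n : ℕ) : MvPolynomial (Fin 2) R :=
  ∑ p ∈ antidiagonal n, c p.1 p.2 • (X 0 ^ p.1 * X 1 ^ p.2)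

lemma isHomogeneous_binaryForm (c : ℕ → ℕ → R) (n : ℕ) : (binaryForm c n).IsHomogeneous n := by
  refine IsHomogeneous.sum _ _ _ fun p hp => ?_
  rw [smul_eq_C_mul, ← mem_antidiagonal.mp hp]
  exact ((isHomogeneous_X_pow _ _).mul (isHomogeneous_X_pow _ _)).C_mul _

lemma besselOp_add_besselOp_binaryForm_succ (a b : R) (c : ℕ → ℕ → R) (n : ℕ) :
    besselOp a 0 (binaryForm c (n + 1)) + besselOp b 1 (binaryForm c (n + 1)) =
      binaryForm (fun s t => ((s : R) + 1) * (s + a) * c (s + 1) t +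
        ((t : R) + 1) * (t + b) * c s (t + 1)) n := by
  have h01 : (0 : Fin 2) ≠ 1 := by decide
  have hx : besselOp a 0 (binaryForm c (n + 1)) = binaryForm (fun s t =>
      ((s : R) + 1) * (s + a) * c (s + 1) t) n := by
    rw [binaryForm, Finset.Nat.sum_antidiagonal_succ, map_add, map_sum]
    simp only [pow_zero, one_mul, map_smul, besselOp_X_pow_of_ne a h01.symm,
      besselOp_X_pow_succ_mul a h01, smul_zero, zero_add, smul_smul, mul_comm (c _ _), binaryForm]
  have hy : besselOp b 1 (binaryForm c (n + 1)) = binaryForm (fun s t =>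
      ((t : R) + 1) * (t + b) * c s (t + 1)) n := by
    rw [binaryForm, Finset.Nat.sum_antidiagonal_succ', map_add, map_sum]
    simp only [pow_zero, mul_one, map_smul, besselOp_X_pow_of_ne b h01,
      besselOp_X_pow_mul_X_pow_succ b h01.symm, smul_zero, zero_add, smul_smul, mul_comm (c _ _),
      binaryForm]
  rw [hx, hy, binaryForm, binaryForm, binaryForm, ← sum_add_distrib]
  simp only [add_smul]

lemma pderiv_aeval_X_zero_add_X_one (i : Fin 2) (Q : Polynomial R) :
    pderiv i (Polynomial.aeval (X 0 + X 1 : MvPolynomial (Fin 2) R) Q) =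
      Polynomial.aeval (X 0 + X 1) (Polynomial.derivative Q) := by
  rw [Derivation.map_aeval]
  fin_cases i <;> simp

end BinaryForm

noncomputable def jacobiCoeff (l1 l2 : ℂ) (l s t : ℕ) : ℂ :=
  (-1) ^ s * gbinom ((l : ℂ) + l1 - 1) t * gbinom ((l : ℂ) + l2 - 1) s

lemma jacobiCoeff_rec (l1 l2 : ℂ) {l s t : ℕ} (h : s + t + 1 = l) :
    ((s : ℂ) + 1) * (s + l1) * jacobiCoeff l1 l2 l (s + 1) t +
      ((t : ℂ) + 1) * (t + l2) * jacobiCoeff l1 l2 l s (t + 1) = 0 := by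
  subst h
  -- both terms reduce to `±(-1)^s (s + λ1) (t + λ2) C(ℓ+λ1-1, t) C(ℓ+λ2-1, s)`
  have hs := gbinom_succ (((s + t + 1 : ℕ) : ℂ) + l2 - 1) s
  have ht := gbinom_succ (((s + t + 1 : ℕ) : ℂ) + l1 - 1) t
  rw [jacobiCoeff, jacobiCoeff, pow_succ]
  push_cast at hs ht ⊢
  linear_combination (-(-1) ^ s * (s + l1) * gbinom ((s + t + 1 : ℂ) + l1 - 1) t) * hs +
    ((-1) ^ s * (t + l2) * gbinom ((s + t + 1 : ℂ) + l2 - 1) s) * ht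

/-- `(x + y)^ℓ P_ℓ^{(λ1-1, λ2-1)}((y - x)/(x + y))`. -/
noncomputable def jacobiForm (l1 l2 : ℂ) (l : ℕ) : MvPolynomial (Fin 2) ℂ :=
  binaryForm (jacobiCoeff l1 l2 l) l

lemma intertwiner_eq_jacobiForm_mul (l1 l2 : ℂ) (l : ℕ) (Q : Polynomial ℂ) :
    intertwiner l1 l2 l Q = jacobiForm l1 l2 l * Polynomial.aeval (X 0 + X 1) Q := by
  rw [intertwiner, jacobiForm, binaryForm, Finset.Nat.sum_antidiagonal_eq_sum_range_succ_mk]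
  rfl

lemma besselOp_add_besselOp_jacobiForm (l1 l2 : ℂ) (l : ℕ) :
    besselOp l1 0 (jacobiForm l1 l2 l) + besselOp l2 1 (jacobiForm l1 l2 l) = 0 := by
  cases l with
  | zero => simp [jacobiForm, binaryForm, besselOp_apply]
  | succ n =>
    rw [jacobiForm, besselOp_add_besselOp_binaryForm_succ, binaryForm]
    refine sum_eq_zero fun p hp => ?_
    rw [jacobiCoeff_rec l1 l2 (by rw [mem_antidiagonal.mp hp]), zero_smul]

theorem intertwiner_equivariant_general (l1 l2 : ℂ) (l : ℕ) (Q : Polynomial ℂ) :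
    intertwiner l1 l2 l (sH (l1 + l2 + 2 * l) Q) = tH l1 l2 (intertwiner l1 l2 l Q) ∧
    intertwiner l1 l2 l (sE Q) = tE (intertwiner l1 l2 l Q) ∧
    intertwiner l1 l2 l (sF (l1 + l2 + 2 * l) Q) = tF l1 l2 (intertwiner l1 l2 l Q) := by
  have euler : X 0 * pderiv 0 (jacobiForm l1 l2 l) + X 1 * pderiv 1 (jacobiForm l1 l2 l) =
      (l : MvPolynomial (Fin 2) ℂ) * jacobiForm l1 l2 l := by
    have := (isHomogeneous_binaryForm (jacobiCoeff l1 l2 l) l).sum_X_mul_pderiv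
    rwa [Fin.sum_univ_two, nsmul_eq_mul] at this
  have bessel := besselOp_add_besselOp_jacobiForm l1 l2 l
  rw [besselOp_apply, besselOp_apply] at bessel
  simp only [intertwiner_eq_jacobiForm_mul, sH, sE, sF, tH, tE, tF, map_add, map_neg, map_mul,
    map_smul, Polynomial.aeval_X, pderiv_mul, pderiv_aeval_X_zero_add_X_one, smul_eq_C_mul,
    map_ofNat, map_natCast] at bessel ⊢
  refine ⟨?_, by ring, ?_⟩
  · linear_combination (-2 * Polynomial.aeval (X 0 + X 1 : MvPolynomial (Fin 2) ℂ) Q) * euler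
  · linear_combination Polynomial.aeval (X 0 + X 1 : MvPolynomial (Fin 2) ℂ) Q * bessel +
      (2 * Polynomial.aeval (X 0 + X 1 : MvPolynomial (Fin 2) ℂ) (Polynomial.derivative Q)) * euler

/-- `Φ̃_ℓ^{λ1,λ2}` intertwines `π*_{λ1+λ2+2ℓ}` with `π*_{λ1} ⊗ π*_{λ2}`. -/
theorem intertwiner_equivariant (l1 l2 : ℂ)
    (h1 : ∀ m : ℕ, l1 ≠ -(m : ℂ)) (h2 : ∀ m : ℕ, l2 ≠ -(m : ℂ))
    (h12 : ∀ m : ℕ, l1 + l2 ≠ -(m : ℂ)) (l : ℕ) (Q : Polynomial ℂ) :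
    intertwiner l1 l2 l (sH (l1 + l2 + 2 * l) Q) = tH l1 l2 (intertwiner l1 l2 l Q) ∧
    intertwiner l1 l2 l (sE Q) = tE (intertwiner l1 l2 l Q) ∧
    intertwiner l1 l2 l (sF (l1 + l2 + 2 * l) Q) = tF l1 l2 (intertwiner l1 l2 l Q) :=
  intertwiner_equivariant_general l1 l2 l Q
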